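/- For every real m > 1, the free T density integrates to 1: ∫_{−2m/(m−1)}^{2m/(m−1)} f_{fT}(x;m) dx = 1. -/

import Mathlib

open MeasureTheory Real

/-- Density of the free T-distribution of parameter `m`. -/
noncomputable def fTDensity (m : ℝ) : ℝ → ℝ :=
  Set.indicator (Set.Icc (-(2 * m / (m - 1))) (2 * m / (m - 1)))
    (fun x => Real.sqrt (4 - ((m - 1) / m) ^ 2 * x ^ 2) / (2 * π * (1 + x ^ 2 / m)))

/-- Explicit antiderivative of the free T density. -/
noncomputable def fTAnti (m : ℝ) (x : ℝ) : ℝ :=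
  (-(m - 1) * Real.arcsin ((m - 1) * x / (2 * m))
    + (m + 1) * Real.arcsin ((m + 1) * x / (2 * Real.sqrt (m * (x ^ 2 + m))))) / (2 * π)

lemma fTAnti_cont (m : ℝ) (hm : 1 < m) : Continuous (fTAnti m) := by
  have hm0 : (0:ℝ) < m := by linarith
  have hG : ∀ x : ℝ, 0 < m * (x ^ 2 + m) := fun x => by positivity
  apply Continuous.div_const
  apply Continuous.add
  · exact continuous_const.mul (Real.continuous_arcsin.comp (by continuity))
  · refine continuous_const.mul (Real.continuous_arcsin.comp ?_)
    apply Continuous.div (by continuity)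
    · exact continuous_const.mul (Real.continuous_sqrt.comp (by continuity))
    · intro x
      have := Real.sqrt_pos.mpr (hG x)
      positivity

lemma fTAnti_deriv (m : ℝ) (hm : 1 < m) (x : ℝ)
    (hx : x ∈ Set.Ioo (-(2 * m / (m - 1))) (2 * m / (m - 1))) :
    HasDerivAt (fTAnti m)
      (Real.sqrt (4 - ((m - 1) / m) ^ 2 * x ^ 2) / (2 * π * (1 + x ^ 2 / m))) x := by
  have hm0 : (0:ℝ) < m := by linarith
  have hm1 : (0:ℝ) < m - 1 := by linarith
  have hxl : -(2 * m) < (m - 1) * x := by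
    have h := hx.1
    rw [show -(2 * m / (m - 1)) = (-(2 * m)) / (m - 1) by ring, div_lt_iff₀ hm1] at h
    linarith [mul_comm x (m - 1)]
  have hxu : (m - 1) * x < 2 * m := by
    have h := hx.2
    rw [lt_div_iff₀ hm1] at h
    linarith [mul_comm x (m - 1)]
  have hS : 0 < 4 * m ^ 2 - (m - 1) ^ 2 * x ^ 2 := by nlinarith
  have hG : 0 < m * (x ^ 2 + m) := by positivity
  set S := 4 * m ^ 2 - (m - 1) ^ 2 * x ^ 2 with hSdef
  set s := Real.sqrt S with hsdef
  set t := Real.sqrt (m * (x ^ 2 + m)) with htdef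
  have hs0 : 0 < s := Real.sqrt_pos.mpr hS
  have ht0 : 0 < t := Real.sqrt_pos.mpr hG
  have hs2 : s ^ 2 = S := Real.sq_sqrt hS.le
  have ht2 : t ^ 2 = m * (x ^ 2 + m) := Real.sq_sqrt hG.le
  -- first arcsin argument
  have hy1lt : (m - 1) * x / (2 * m) < 1 := by
    rw [div_lt_one (by positivity)]; linarith
  have hy1gt : -1 < (m - 1) * x / (2 * m) := by
    rw [lt_div_iff₀ (by positivity)]; linarith
  have hd1 : HasDerivAt (fun y : ℝ => (m - 1) * y / (2 * m)) ((m - 1) / (2 * m)) x := by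
    simpa using ((hasDerivAt_id x).const_mul (m - 1)).div_const (2 * m)
  have harc1 : HasDerivAt (fun y : ℝ => Real.arcsin ((m - 1) * y / (2 * m)))
      (1 / Real.sqrt (1 - ((m - 1) * x / (2 * m)) ^ 2) * ((m - 1) / (2 * m))) x :=
    by have := (Real.hasDerivAt_arcsin (ne_of_gt hy1gt) (ne_of_lt hy1lt)).comp x hd1; exact this
  have hsq1 : Real.sqrt (1 - ((m - 1) * x / (2 * m)) ^ 2) = s / (2 * m) := by
    have h : 1 - ((m - 1) * x / (2 * m)) ^ 2 = S / (2 * m) ^ 2 := by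
      rw [hSdef, eq_div_iff (by positivity : ((2*m)^2 : ℝ) ≠ 0)]
      field_simp
      ring
    rw [h, Real.sqrt_div hS.le, Real.sqrt_sq (by positivity)]
  -- second arcsin argument
  have hdG : HasDerivAt (fun y : ℝ => m * (y ^ 2 + m)) (m * (2 * x)) x := by
    simpa using ((hasDerivAt_pow 2 x).add_const m).const_mul m
  have hdt : HasDerivAt (fun y : ℝ => Real.sqrt (m * (y ^ 2 + m)))
      (1 / (2 * t) * (m * (2 * x))) x :=
    (Real.hasDerivAt_sqrt (ne_of_gt hG)).comp x hdG
  have hdenne : 2 * t ≠ 0 := by positivity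
  have hdy2 : HasDerivAt (fun y : ℝ => (m + 1) * y / (2 * Real.sqrt (m * (y ^ 2 + m))))
      (((m + 1) * (2 * t) - (m + 1) * x * (2 * (1 / (2 * t) * (m * (2 * x))))) / (2 * t) ^ 2) x := by
    exact HasDerivAt.div (by simpa using (hasDerivAt_id x).const_mul (m + 1))
      (hdt.const_mul 2) hdenne
  have hdy2' : HasDerivAt (fun y : ℝ => (m + 1) * y / (2 * Real.sqrt (m * (y ^ 2 + m))))
      ((m + 1) * m ^ 2 / (2 * t ^ 3)) x := by
    convert hdy2 using 1
    have hQ : (2 * t) ^ 2 = 4 * (m * (x ^ 2 + m)) := by rw [mul_pow, ht2]; ring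
    rw [hQ]
    field_simp
    linear_combination (-4 * (t^2 + m^2)) * ht2
  have hy2sq : ((m + 1) * x / (2 * t)) ^ 2 = (m + 1) ^ 2 * x ^ 2 / (2 * t) ^ 2 := by
    rw [div_pow, mul_pow]
  have hy2lt1 : ((m + 1) * x / (2 * t)) ^ 2 < 1 := by
    rw [hy2sq, div_lt_one (by positivity)]
    nlinarith [ht2, hS]
  have habs : |(m + 1) * x / (2 * t)| < 1 := by
    rwa [← sq_lt_one_iff_abs_lt_one]
  have harc2 : HasDerivAt (fun y : ℝ => Real.arcsin ((m + 1) * y / (2 * Real.sqrt (m * (y ^ 2 + m)))))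
      (1 / Real.sqrt (1 - ((m + 1) * x / (2 * t)) ^ 2) * ((m + 1) * m ^ 2 / (2 * t ^ 3))) x :=
    (Real.hasDerivAt_arcsin (by rw [abs_lt] at habs; exact ne_of_gt habs.1)
      (by rw [abs_lt] at habs; exact ne_of_lt habs.2)).comp x hdy2'
  have hsq2 : Real.sqrt (1 - ((m + 1) * x / (2 * t)) ^ 2) = s / (2 * t) := by
    have h : 1 - ((m + 1) * x / (2 * t)) ^ 2 = S / (2 * t) ^ 2 := by
      rw [hy2sq, hSdef, eq_div_iff (by positivity : ((2 * t) ^ 2 : ℝ) ≠ 0)]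
      field_simp
      linear_combination (4:ℝ) * ht2
    rw [h, Real.sqrt_div hS.le, Real.sqrt_sq (by positivity)]
  -- combine
  have hF := ((harc1.const_mul (-(m - 1))).add (harc2.const_mul (m + 1))).div_const (2 * π)
  rw [hsq1, hsq2] at hF
  have hval : (-(m - 1) * (1 / (s / (2 * m)) * ((m - 1) / (2 * m)))
        + (m + 1) * (1 / (s / (2 * t)) * ((m + 1) * m ^ 2 / (2 * t ^ 3)))) / (2 * π)
      = Real.sqrt (4 - ((m - 1) / m) ^ 2 * x ^ 2) / (2 * π * (1 + x ^ 2 / m)) := by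
    have hsq3 : Real.sqrt (4 - ((m - 1) / m) ^ 2 * x ^ 2) = s / m := by
      have h : 4 - ((m - 1) / m) ^ 2 * x ^ 2 = S / m ^ 2 := by
        rw [hSdef, eq_div_iff (by positivity : (m^2 : ℝ) ≠ 0)]
        field_simp
      rw [h, Real.sqrt_div hS.le, Real.sqrt_sq hm0.le]
    rw [hsq3]
    have hx2m : (0:ℝ) < 1 + x ^ 2 / m := by positivity
    have hpi := Real.pi_ne_zero
    field_simp
    linear_combination (-t^2) * hs2 + (-m*(m+1)^2) * ht2 + (-t^2) * hSdef
  rw [hval] at hF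
  exact hF

theorem fT_isProbability (m : ℝ) (hm : 1 < m) :
    ∫ x in (-(2 * m / (m - 1)))..(2 * m / (m - 1)), fTDensity m x = 1 := by
  have hm0 : (0:ℝ) < m := by linarith
  have hm1 : (0:ℝ) < m - 1 := by linarith
  have ha0 : 0 < 2 * m / (m - 1) := by positivity
  have hle : -(2 * m / (m - 1)) ≤ 2 * m / (m - 1) := by linarith
  have hcongr : Set.EqOn (fTDensity m)
      (fun x => Real.sqrt (4 - ((m - 1) / m) ^ 2 * x ^ 2) / (2 * π * (1 + x ^ 2 / m)))
      (Set.uIcc (-(2 * m / (m - 1))) (2 * m / (m - 1))) := by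
    intro x hxmem
    rw [Set.uIcc_of_le hle] at hxmem
    exact Set.indicator_of_mem hxmem _
  rw [intervalIntegral.integral_congr hcongr]
  have hcont : Continuous fun x : ℝ =>
      Real.sqrt (4 - ((m - 1) / m) ^ 2 * x ^ 2) / (2 * π * (1 + x ^ 2 / m)) := by
    apply Continuous.div
    · exact Real.continuous_sqrt.comp (by continuity)
    · continuity
    · intro x
      have h1 : (0:ℝ) < 1 + x ^ 2 / m := by positivity
      have := Real.pi_pos
      positivity
  rw [intervalIntegral.integral_eq_sub_of_hasDerivAt_of_le hle
    (fTAnti_cont m hm).continuousOn (fun x hx => fTAnti_deriv m hm x hx)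
    (hcont.intervalIntegrable _ _)]
  -- endpoint values
  have hne : m - 1 ≠ 0 := ne_of_gt hm1
  have hmne : m ≠ 0 := ne_of_gt hm0
  have harg1 : (m - 1) * (2 * m / (m - 1)) / (2 * m) = 1 := by field_simp
  have hsqrtval : Real.sqrt (m * ((2 * m / (m - 1)) ^ 2 + m)) = m * (m + 1) / (m - 1) := by
    have h : m * ((2 * m / (m - 1)) ^ 2 + m) = (m * (m + 1) / (m - 1)) ^ 2 := by
      field_simp; ring
    rw [h, Real.sqrt_sq (by positivity)]
  have harg2 : (m + 1) * (2 * m / (m - 1)) / (2 * (m * (m + 1) / (m - 1))) = 1 := by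
    have hmp1 : (m:ℝ) + 1 ≠ 0 := by positivity
    field_simp
  have hFa : fTAnti m (2 * m / (m - 1)) = 1 / 2 := by
    rw [fTAnti, hsqrtval, harg1, harg2, Real.arcsin_one]
    have hpi := Real.pi_ne_zero
    field_simp
    ring
  have hFna : fTAnti m (-(2 * m / (m - 1))) = -(1 / 2) := by
    rw [fTAnti]
    rw [show (-(2 * m / (m - 1))) ^ 2 = (2 * m / (m - 1)) ^ 2 by ring, hsqrtval]
    rw [show (m - 1) * -(2 * m / (m - 1)) / (2 * m) = -(1:ℝ) by
      rw [mul_neg, neg_div, harg1]]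
    rw [show (m + 1) * -(2 * m / (m - 1)) / (2 * (m * (m + 1) / (m - 1))) = -(1:ℝ) by
      rw [mul_neg, neg_div, harg2]]
    rw [Real.arcsin_neg_one]
    have hpi := Real.pi_ne_zero
    field_simp
    ring
  rw [hFa, hFna]
  norm_num
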